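/- arXiv:1404.3067 — 2 statements merged into one kernel-verified Lean document; each statement's English description precedes it below -/
import Mathlib

section
/- Let f : A → B and g : B → C be central extensions of groups, with B perfect. Then the composite g ∘ f : A → C is a central extension; i.e. ker(g ∘ f) ≤ Z(A). -/
/-!
Let `a ∈ ker (g ∘ f)`. Then `f a` is central in `B`, so every commutator `⁅a, x⁆` lies in
`ker f ⊆ Z(A)`. Because these commutators are central, `x ↦ ⁅a, x⁆` is a homomorphism `A → A` with
abelian image; it kills `[A, A]`, and it kills the central subgroup `ker f`. Since `B` is perfect and
`f` is surjective, `[A, A] ⊔ ker f = A`, so `⁅a, x⁆ = 1` for all `x`, i.e. `a` is central.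
-/

open scoped commutatorElement

open Subgroup

section

variable {G H : Type*} [Group G] [Group H]

theorem commutatorElement_mul_right_of_mem_center {a y : G} (hy : ⁅a, y⁆ ∈ center G) (x : G) :
    ⁅a, x * y⁆ = ⁅a, x⁆ * ⁅a, y⁆ :=
  calc ⁅a, x * y⁆ = a * x * a⁻¹ * ⁅a, y⁆ * x⁻¹ := by simp only [commutatorElement_def]; group
    _ = a * x * a⁻¹ * x⁻¹ * ⁅a, y⁆ := by
      rw [mul_assoc _ ⁅a, y⁆, ← mem_center_iff.mp hy, ← mul_assoc]
    _ = ⁅a, x⁆ * ⁅a, y⁆ := by rw [commutatorElement_def a x]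

def commutatorLeftHom (a : G) (ha : ∀ x, ⁅a, x⁆ ∈ center G) : G →* G where
  toFun x := ⁅a, x⁆
  map_one' := commutatorElement_one_right a
  map_mul' x y := commutatorElement_mul_right_of_mem_center (ha y) x

theorem commutator_le_ker_of_forall_mem_center (φ : G →* H) (hφ : ∀ x, φ x ∈ center H) :
    commutator G ≤ φ.ker := by
  rw [commutator_def, commutator_le]
  intro p _ q _
  rw [MonoidHom.mem_ker, map_commutatorElement, commutatorElement_eq_one_iff_mul_comm]
  exact (mem_center_iff.mp (hφ p) (φ q)).symm

theorem commutator_sup_ker_eq_top {f : G →* H} (hf : Function.Surjective f)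
    (hH : commutator H = ⊤) : commutator G ⊔ f.ker = ⊤ := by
  rw [← comap_map_eq, commutator_def, map_commutator, map_top_of_surjective f hf, ← commutator_def,
    hH, comap_top]

theorem mem_center_of_map_mem_center {f : G →* H} (hf : Function.Surjective f)
    (hker : f.ker ≤ center G) (hH : commutator H = ⊤) {a : G} (ha : f a ∈ center H) :
    a ∈ center G := by
  have hcomm : ∀ x, ⁅a, x⁆ ∈ center G := fun x => hker <| by
    rw [MonoidHom.mem_ker, map_commutatorElement, commutatorElement_eq_one_iff_mul_comm]
    exact (mem_center_iff.mp ha (f x)).symm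
  have hker_le : f.ker ≤ (commutatorLeftHom a hcomm).ker := fun k hk => by
    rw [MonoidHom.mem_ker]
    exact commutatorElement_eq_one_iff_mul_comm.mpr (mem_center_iff.mp (hker hk) a)
  have htop : (commutatorLeftHom a hcomm).ker = ⊤ := by
    rw [eq_top_iff, ← commutator_sup_ker_eq_top hf hH]
    exact sup_le (commutator_le_ker_of_forall_mem_center _ hcomm) hker_le
  refine mem_center_iff.mpr fun x => ?_
  have : ⁅a, x⁆ = 1 := (commutatorLeftHom a hcomm).mem_ker.mp (htop ▸ mem_top x)
  exact (commutatorElement_eq_one_iff_mul_comm.mp this).symm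

end

theorem stmt4_general {A B C : Type*} [Group A] [Group B] [Group C]
    (f : A →* B) (g : B →* C)
    (hf : Function.Surjective f) (hfker : f.ker ≤ Subgroup.center A)
    (hgker : g.ker ≤ Subgroup.center B)
    (hB : commutator B = ⊤) :
    (g.comp f).ker ≤ Subgroup.center A :=
  fun _ ha => mem_center_of_map_mem_center hf hfker hB (hgker ha)

theorem stmt4 {A B C : Type*} [Group A] [Group B] [Group C]
    (f : A →* B) (g : B →* C)
    (hf : Function.Surjective f) (hfker : f.ker ≤ Subgroup.center A)
    (hg : Function.Surjective g) (hgker : g.ker ≤ Subgroup.center B)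
    (hB : commutator B = ⊤) :
    (g.comp f).ker ≤ Subgroup.center A :=
  stmt4_general f g hf hfker hgker hB
end

section
/- (Grün's Lemma) If P is a perfect group, then the quotient P/Z(P) has trivial center. -/
/-!
If `gZ(P)` is central in `P/Z(P)`, every commutator `⁅g, x⁆` is central, and then
`x ↦ ⁅g, x⁆` is a homomorphism from `P` into the abelian group `Z(P)`. A perfect group has no
nontrivial homomorphism to an abelian group, so `⁅g, x⁆ = 1` for all `x`, i.e. `g ∈ Z(P)`.
-/

open scoped commutatorElement IsMulCommutative

namespace Subgroup

variable {G : Type*} [Group G]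

def commutatorElementLeftHom (g : G) (hg : ∀ x, ⁅g, x⁆ ∈ center G) : G →* center G where
  toFun x := ⟨⁅g, x⁆, hg x⟩
  map_one' := by ext; simp
  map_mul' x y := by
    ext
    have hxy : x * ⁅g, y⁆ = ⁅g, y⁆ * x := mem_center_iff.mp (hg y) x
    simp only [coe_mul, commutatorElement_mul_right_eq_mul_conj, mul_assoc, hxy, mul_inv_cancel,
      mul_one]

theorem mem_center_of_commutatorElement_mem_center (hG : _root_.commutator G = ⊤) {g : G}
    (hg : ∀ x, ⁅g, x⁆ ∈ center G) : g ∈ center G := by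
  refine mem_center_iff.mpr fun x => ?_
  have hker : commutatorElementLeftHom g hg x = 1 :=
    MonoidHom.mem_ker.mp <|
      Abelianization.commutator_subset_ker (commutatorElementLeftHom g hg) (hG.ge (mem_top x))
  exact (commutatorElement_eq_one_iff_mul_comm.mp (congrArg Subtype.val hker)).symm

theorem upperCentralSeriesStep_center_eq_of_commutator_eq_top (hG : _root_.commutator G = ⊤) :
    upperCentralSeriesStep (center G) = center G :=
  le_antisymm (fun _ hg => mem_center_of_commutatorElement_mem_center hG hg)
    fun _ hg x => by
      rw [commutatorElement_eq_one_iff_mul_comm.mpr (mem_center_iff.mp hg x).symm]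
      exact one_mem _

end Subgroup

theorem stmt5 {P : Type*} [Group P] (hP : commutator P = ⊤) :
    Subgroup.center (P ⧸ Subgroup.center P) = ⊥ := by
  have hcomap : (Subgroup.center (P ⧸ Subgroup.center P)).comap (QuotientGroup.mk' _) =
      (QuotientGroup.mk' (Subgroup.center P)).ker := by
    rw [← Subgroup.upperCentralSeriesStep_eq_comap_center,
      Subgroup.upperCentralSeriesStep_center_eq_of_commutator_eq_top hP, QuotientGroup.ker_mk']
  rw [← Subgroup.map_comap_eq_self_of_surjective (QuotientGroup.mk'_surjective _)
    (Subgroup.center _), hcomap, Subgroup.map_eq_bot_iff]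
end
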